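/- arXiv:1909.03562 — 4 statements merged into one kernel-verified Lean document; each statement's English description precedes it below -/
import Mathlib

section
/- For each natural number n, the n-Syracuse offset map F_n : (ℕ₊)^n → ℤ[1/2] defined by F_n(a₁,…,aₙ) = Σ_{m=1}^{n} 3^{n-m} 2^{-(a_m+⋯+a_n)} is injective. -/
/-- The `n`-Syracuse offset map `F_n(a₁,…,aₙ) = Σ_{m=1}^n 3^{n-m} 2^{-(a_m+⋯+a_n)}`,
valued in the dyadic rationals (viewed inside `ℚ`). -/
noncomputable def syrF (n : ℕ) (a : Fin n → ℕ+) : ℚ :=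
  ∑ m : Fin n, (3:ℚ) ^ (n - 1 - (m : ℕ))
      * (2:ℚ) ^ (-(∑ i ∈ Finset.Ici m, ((a i : ℕ) : ℤ)))

lemma Ici_succ_map {n : ℕ} (m : Fin n) :
    Finset.Ici m.succ = (Finset.Ici m).map ⟨Fin.succ, Fin.succ_injective n⟩ := by
  ext j
  simp only [Finset.mem_Ici, Finset.mem_map, Function.Embedding.coeFn_mk]
  constructor
  · intro h
    have h0 : j ≠ 0 := by
      intro hj; subst hj; exact absurd h (by simp [Fin.le_def])
    refine ⟨j.pred h0, ?_, Fin.succ_pred _ _⟩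
    rw [← Fin.succ_le_succ_iff, Fin.succ_pred]
    exact h
  · rintro ⟨i, hi, rfl⟩
    exact Fin.succ_le_succ_iff.mpr hi

lemma syrF_succ (n : ℕ) (a : Fin (n+1) → ℕ+) :
    syrF (n+1) a = (3:ℚ)^n * (2:ℚ)^(-(∑ i, ((a i : ℕ) : ℤ))) + syrF n (a ∘ Fin.succ) := by
  unfold syrF
  rw [Fin.sum_univ_succ]
  congr 1
  · have h0 : Finset.Ici (0 : Fin (n+1)) = Finset.univ := by
      ext j; simp [Fin.zero_le]
    rw [h0]; norm_num
  · apply Finset.sum_congr rfl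
    intro m _
    rw [Ici_succ_map, Finset.sum_map]
    simp only [Function.Embedding.coeFn_mk, Fin.val_succ, Function.comp]
    congr 2
    omega

lemma syrF_odd (n : ℕ) (a : Fin (n+1) → ℕ+) :
    ∃ k : ℤ, Odd k ∧ (2:ℚ)^(∑ i, ((a i : ℕ) : ℤ)) * syrF (n+1) a = (k : ℚ) := by
  induction n with
  | zero =>
    refine ⟨1, odd_one, ?_⟩
    rw [syrF_succ]
    have h0 : syrF 0 (a ∘ Fin.succ) = 0 := by simp [syrF]
    rw [h0, add_zero, pow_zero, one_mul, ← zpow_add₀ (by norm_num : (2:ℚ) ≠ 0),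
      add_neg_cancel, zpow_zero, Int.cast_one]
  | succ n ih =>
    obtain ⟨k, hk, hke⟩ := ih (a ∘ Fin.succ)
    have h2 : (2:ℚ) ≠ 0 := by norm_num
    refine ⟨3^(n+1) + 2^((a 0 : ℕ)) * k, ?_, ?_⟩
    · refine ((by decide : Odd (3:ℤ)).pow).add_even ?_
      exact even_iff_two_dvd.mpr (Dvd.dvd.mul_right (dvd_pow_self 2 (a 0).pos.ne') k)
    · have hS : (∑ i, ((a i : ℕ) : ℤ))
          = ((a 0 : ℕ) : ℤ) + ∑ i : Fin (n+1), (((a ∘ Fin.succ) i : ℕ) : ℤ) := by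
        rw [Fin.sum_univ_succ]; rfl
      set S' : ℤ := ∑ i : Fin (n+1), (((a ∘ Fin.succ) i : ℕ) : ℤ) with hS'
      rw [syrF_succ, hS, mul_add]
      have e1 : (2:ℚ)^(((a 0 : ℕ):ℤ) + S') * ((3:ℚ)^(n+1) * 2^(-(((a 0 : ℕ):ℤ) + S')))
          = 3^(n+1) := by
        rw [mul_comm ((3:ℚ)^(n+1)), ← mul_assoc, ← zpow_add₀ h2, add_neg_cancel,
          zpow_zero, one_mul]
      have e2 : (2:ℚ)^(((a 0 : ℕ):ℤ) + S') * syrF (n+1) (a ∘ Fin.succ)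
          = (2:ℚ)^((a 0 : ℕ)) * k := by
        rw [zpow_add₀ h2, mul_assoc, hke, zpow_natCast]
      rw [e1, e2]
      push_cast
      ring

lemma syrF_sum_eq (n : ℕ) (a b : Fin (n+1) → ℕ+)
    (h : syrF (n+1) a = syrF (n+1) b) :
    (∑ i, ((a i : ℕ) : ℤ)) = ∑ i, ((b i : ℕ) : ℤ) := by
  have key : ∀ (a b : Fin (n+1) → ℕ+), syrF (n+1) a = syrF (n+1) b →
      ¬ (∑ i, ((a i : ℕ) : ℤ)) < ∑ i, ((b i : ℕ) : ℤ) := by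
    intro a b h hlt
    obtain ⟨ka, hka, hkae⟩ := syrF_odd n a
    obtain ⟨kb, hkb, hkbe⟩ := syrF_odd n b
    set Sa := ∑ i, ((a i : ℕ) : ℤ)
    set Sb := ∑ i, ((b i : ℕ) : ℤ)
    have h2 : (2:ℚ) ≠ 0 := by norm_num
    obtain ⟨d, hd⟩ : ∃ d : ℕ, Sb = Sa + (d : ℤ) := ⟨(Sb - Sa).toNat, by omega⟩
    have hd1 : d ≠ 0 := by omega
    have : (kb : ℚ) = ((2 ^ d * ka : ℤ) : ℚ) := by
      rw [← hkbe, ← h, hd, zpow_add₀ h2, mul_comm ((2:ℚ)^Sa), mul_assoc, hkae]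
      push_cast
      rw [← zpow_natCast (2:ℚ)]
    have hkb2 : kb = 2 ^ d * ka := by exact_mod_cast this
    have : Even kb := by
      rw [hkb2]
      exact even_iff_two_dvd.mpr (Dvd.dvd.mul_right (dvd_pow_self 2 hd1) ka)
    exact (Int.not_odd_iff_even.mpr this) hkb
  rcases lt_trichotomy (∑ i, ((a i : ℕ) : ℤ)) (∑ i, ((b i : ℕ) : ℤ)) with hlt | heq | hgt
  · exact absurd hlt (key a b h)
  · exact heq
  · exact absurd hgt (key b a h.symm)

/-- The `n`-Syracuse offset map is injective. -/
theorem stmt_3 (n : ℕ) : Function.Injective (syrF n) := by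
  induction n with
  | zero =>
    intro a b _
    funext i
    exact i.elim0
  | succ n ih =>
    intro a b h
    have hs := syrF_sum_eq n a b h
    rw [syrF_succ, syrF_succ, hs] at h
    have htail : a ∘ Fin.succ = b ∘ Fin.succ := ih (add_left_cancel h)
    have h0 : a 0 = b 0 := by
      rw [Fin.sum_univ_succ, Fin.sum_univ_succ] at hs
      have hts : ∑ i : Fin n, ((a i.succ : ℕ) : ℤ) = ∑ i : Fin n, ((b i.succ : ℕ) : ℤ) := by
        apply Finset.sum_congr rfl
        intro i _
        exact congrArg (fun x : ℕ+ => ((x : ℕ) : ℤ)) (congrFun htail i)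
      have : ((a 0 : ℕ) : ℤ) = ((b 0 : ℕ) : ℤ) := by omega
      exact PNat.coe_injective (by exact_mod_cast this)
    funext i
    refine Fin.cases h0 (fun j => ?_) i
    exact congrFun htail j
end

section
/- For every n ∈ ℕ and N odd, Syr^n(N) ≡ F_n(ā⁽ⁿ⁾(N)) (mod 3^n), where the mod-3^n reduction of a dyadic rational M/2^a is defined via the inverse of 2 modulo 3^n. In particular, Syr^n(N) is never divisible by 3 for n ≥ 1. -/
/-- The Syracuse map: the largest odd divisor of `3N+1`. -/
def syr (n : ℕ) : ℕ := ordCompl[2] (3 * n + 1)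

/-- The `n`-Syracuse valuation `ā⁽ⁿ⁾(N) = (ν₂(3N+1), ν₂(3 Syr(N)+1), …)`. -/
def sval (N n : ℕ) : Fin n → ℕ := fun i => (3 * syr^[(i : ℕ)] N + 1).factorization 2

/-- The image of the `n`-Syracuse offset map `F_n` in `ℤ/3^nℤ`, via the unique ring
homomorphism `ℤ[1/2] → ℤ/3^nℤ` (so `2^{-a}` maps to `(2 : ZMod (3^n))⁻¹ ^ a`). -/
def syrFZ (n : ℕ) (a : Fin n → ℕ) : ZMod (3 ^ n) :=
  ∑ m : Fin n, 3 ^ (n - 1 - (m : ℕ)) * (2 : ZMod (3 ^ n))⁻¹ ^ (∑ i ∈ Finset.Ici m, a i)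

lemma syr_key (M : ℕ) : 2 ^ ((3 * M + 1).factorization 2) * syr M = 3 * M + 1 :=
  Nat.ordProj_mul_ordCompl_eq_self (3 * M + 1) 2

lemma two_unit (n : ℕ) : IsUnit (2 : ZMod (3 ^ n)) := by
  haveI : NeZero (3 ^ n) := ⟨by positivity⟩
  have : ((2 : ℕ) : ZMod (3 ^ n)) = 2 := by push_cast; rfl
  rw [← this, ZMod.isUnit_iff_coprime]
  exact Nat.Coprime.pow_right n (by decide)

lemma syr_cast (n M : ℕ) :
    ((syr M : ℕ) : ZMod (3 ^ n)) =
      (2 : ZMod (3 ^ n))⁻¹ ^ ((3 * M + 1).factorization 2) * (3 * M + 1) := by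
  set a := (3 * M + 1).factorization 2 with ha
  have h2 : (2 : ZMod (3 ^ n)) ^ a * (syr M : ZMod (3 ^ n))
      = 3 * (M : ZMod (3 ^ n)) + 1 := by
    have := congrArg (Nat.cast : ℕ → ZMod (3 ^ n)) (syr_key M)
    push_cast at this
    convert this using 2
  have hu : (2 : ZMod (3 ^ n))⁻¹ * 2 = 1 := ZMod.inv_mul_of_unit 2 (two_unit n)
  calc ((syr M : ℕ) : ZMod (3 ^ n)) = ((2 : ZMod (3 ^ n))⁻¹ * 2) ^ a * (syr M : ℕ) := by
        rw [hu, one_pow, one_mul]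
    _ = (2 : ZMod (3 ^ n))⁻¹ ^ a * ((2 : ZMod (3 ^ n)) ^ a * (syr M : ℕ)) := by
        rw [mul_pow, mul_assoc]
    _ = (2 : ZMod (3 ^ n))⁻¹ ^ a * (3 * M + 1) := by rw [h2]

lemma syr_iter (n N k : ℕ) :
    ((syr^[k] N : ℕ) : ZMod (3 ^ n)) =
      3 ^ k * (2 : ZMod (3 ^ n))⁻¹ ^ (∑ i ∈ Finset.range k, (3 * syr^[i] N + 1).factorization 2) * N
      + ∑ m ∈ Finset.range k, 3 ^ (k - 1 - m) *
          (2 : ZMod (3 ^ n))⁻¹ ^ (∑ i ∈ Finset.Ico m k, (3 * syr^[i] N + 1).factorization 2) := by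
  induction k with
  | zero => simp
  | succ k ih =>
    rw [Function.iterate_succ_apply', syr_cast, ih]
    rw [Finset.sum_range_succ]
    rw [Finset.sum_range_succ (fun m => (3:ZMod (3^n)) ^ (k + 1 - 1 - m) *
          (2 : ZMod (3 ^ n))⁻¹ ^ (∑ i ∈ Finset.Ico m (k+1), (3 * syr^[i] N + 1).factorization 2))]
    have hIco : ∀ m ∈ Finset.range k,
        (3:ZMod (3^n)) ^ (k + 1 - 1 - m) *
          (2 : ZMod (3 ^ n))⁻¹ ^ (∑ i ∈ Finset.Ico m (k+1), (3 * syr^[i] N + 1).factorization 2)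
        = (3 * (2 : ZMod (3 ^ n))⁻¹ ^ ((3 * syr^[k] N + 1).factorization 2)) *
            ((3:ZMod (3^n)) ^ (k - 1 - m) *
            (2 : ZMod (3 ^ n))⁻¹ ^ (∑ i ∈ Finset.Ico m k, (3 * syr^[i] N + 1).factorization 2)) := by
      intro m hm
      rw [Finset.mem_range] at hm
      rw [Finset.sum_Ico_succ_top hm.le, pow_add]
      have : k + 1 - 1 - m = (k - 1 - m) + 1 := by omega
      rw [this, pow_succ]
      ring
    rw [Finset.sum_congr rfl hIco, ← Finset.mul_sum]
    rw [show Finset.Ico k (k+1) = {k} by ext x; simp [Finset.mem_Ico]]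
    simp only [Finset.sum_singleton, Nat.sub_self, pow_add,
      show k + 1 - 1 - k = 0 from by omega, pow_zero]
    set c := (3 * syr^[k] N + 1).factorization 2 with hc
    set A := ∑ i ∈ Finset.range k, (3 * syr^[i] N + 1).factorization 2 with hA
    set B := ∑ m ∈ Finset.range k, (3:ZMod (3^n)) ^ (k - 1 - m) *
      (2 : ZMod (3 ^ n))⁻¹ ^ (∑ i ∈ Finset.Ico m k, (3 * syr^[i] N + 1).factorization 2) with hB
    ring

/-- `Syr^n(N) ≡ F_n(ā⁽ⁿ⁾(N)) (mod 3^n)`; in particular `Syr^n(N)` is not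
divisible by `3` when `n ≥ 1`. -/
theorem stmt_6 (N : ℕ) (hN : Odd N) (hpos : 0 < N) (n : ℕ) :
    ((syr^[n] N : ℕ) : ZMod (3 ^ n)) = syrFZ n (sval N n) ∧
    (1 ≤ n → ¬ (3 ∣ syr^[n] N)) := by
  constructor
  · rw [syr_iter n N n]
    have h3 : (3 : ZMod (3 ^ n)) ^ n = 0 := by
      have : ((3 ^ n : ℕ) : ZMod (3 ^ n)) = 0 := ZMod.natCast_self _
      push_cast at this; exact this
    rw [h3, zero_mul, zero_mul, zero_add]
    unfold syrFZ sval
    have hinner : ∀ m : Fin n,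
        (∑ i ∈ Finset.Ici m, (3 * syr^[(i : ℕ)] N + 1).factorization 2)
        = ∑ i ∈ Finset.Ico (m : ℕ) n, (3 * syr^[i] N + 1).factorization 2 := by
      intro m
      have hIcc : Finset.Icc (m : ℕ) (n - 1) = Finset.Ico (m : ℕ) n := by
        have := m.isLt
        ext x
        simp only [Finset.mem_Icc, Finset.mem_Ico]
        omega
      rw [← Fin.map_valEmbedding_Ici, Finset.sum_map]
      rfl
    simp only [hinner]
    rw [Fin.sum_univ_eq_sum_range (fun m => (3:ZMod (3^n)) ^ (n - 1 - m) *
      (2 : ZMod (3 ^ n))⁻¹ ^ (∑ i ∈ Finset.Ico m n, (3 * syr^[i] N + 1).factorization 2))]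
  · intro hn
    obtain ⟨k, rfl⟩ : ∃ k, n = k + 1 := ⟨n - 1, by omega⟩
    rw [Function.iterate_succ_apply']
    intro hdvd
    have := (hdvd.trans (Nat.ordCompl_dvd (3 * syr^[k] N + 1) 2))
    omega
end

section
/- Suppose (a₁,…,a_{k+1}) and (a'₁,…,a'_{k+1}) are tuples of positive integers with a₁+⋯+a_{k+1} = a'₁+⋯+a'_{k+1} = l, such that Σ_{j=1}^{k+1} 3^{j-1} 2^{l - (a₁+⋯+a_j)} and Σ_{j=1}^{k+1} 3^{j-1} 2^{l - (a'₁+⋯+a'_j)} are both strictly less than 3^n and congruent modulo 3^n. Then the tuples are equal. -/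
private lemma two_pow_mul_odd_le {v w o o' : ℕ} (ho : Odd o) (ho' : Odd o')
    (h : 2 ^ v * o = 2 ^ w * o') (hvw : v ≤ w) : v = w := by
  have h' : o = 2 ^ (w - v) * o' := by
    rw [show w = v + (w - v) by omega, pow_add, mul_assoc] at h
    exact Nat.eq_of_mul_eq_mul_left (by positivity) h
  by_contra hne
  have h1 : 1 ≤ w - v := by omega
  have h2 : 2 ∣ o := h' ▸ Dvd.dvd.mul_right (dvd_pow_self 2 (by omega)) o'
  have := Nat.odd_iff.mp ho
  omega

private lemma two_pow_mul_odd_inj {v w o o' : ℕ} (ho : Odd o) (ho' : Odd o')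
    (h : 2 ^ v * o = 2 ^ w * o') : v = w := by
  rcases le_total v w with hvw | hvw
  · exact two_pow_mul_odd_le ho ho' h hvw
  · exact (two_pow_mul_odd_le ho' ho h.symm hvw).symm

private lemma core_inj : ∀ (k : ℕ) (b c : Fin (k + 1) → ℕ), StrictAnti b → StrictAnti c →
    (∑ j : Fin (k + 1), 3 ^ (j : ℕ) * 2 ^ (b j)) = (∑ j : Fin (k + 1), 3 ^ (j : ℕ) * 2 ^ (c j)) → b = c := by
  intro k
  induction k with
  | zero =>
    intro b c _ _ h
    rw [Fin.sum_univ_one, Fin.sum_univ_one] at h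
    simp only [Fin.val_zero, pow_zero, one_mul] at h
    have hb0 : b 0 = c 0 := Nat.pow_right_injective (le_refl 2) h
    funext j
    have : j = 0 := Fin.fin_one_eq_zero j
    rw [this, hb0]
  | succ k ih =>
    intro b c hb hc h
    -- factor out 2 ^ (b (last)) resp. 2 ^ (c last)
    have hfac : ∀ (b : Fin (k + 2) → ℕ), StrictAnti b →
        (∑ j : Fin (k + 2), 3 ^ (j : ℕ) * 2 ^ (b j)) =
          2 ^ (b (Fin.last (k + 1))) * ∑ j : Fin (k + 2), 3 ^ (j : ℕ) * 2 ^ (b j - b (Fin.last (k + 1))) := by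
      intro b hb
      rw [Finset.mul_sum]
      refine Finset.sum_congr rfl fun j _ => ?_
      have hle : b (Fin.last (k + 1)) ≤ b j := hb.antitone (Fin.le_last j)
      rw [mul_left_comm, ← pow_add]
      congr 2
      omega
    have hodd : ∀ (b : Fin (k + 2) → ℕ), StrictAnti b →
        Odd (∑ j : Fin (k + 2), 3 ^ (j : ℕ) * 2 ^ (b j - b (Fin.last (k + 1)))) := by
      intro b hb
      rw [Fin.sum_univ_castSucc]
      refine Even.add_odd ?_ ?_
      · refine Finset.even_sum _ fun j _ => ?_
        have hlt : b (Fin.last (k + 1)) < b j.castSucc := hb (Fin.castSucc_lt_last j)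
        have h1 : 1 ≤ b j.castSucc - b (Fin.last (k + 1)) := by omega
        refine Even.mul_left ?_ _
        rw [show b j.castSucc - b (Fin.last (k + 1)) =
          1 + (b j.castSucc - b (Fin.last (k + 1)) - 1) by omega, pow_add, pow_one]
        exact even_two.mul_right _
      · simp only [Nat.sub_self, pow_zero, mul_one]
        exact Odd.pow (by decide)
    have hmeq : b (Fin.last (k + 1)) = c (Fin.last (k + 1)) := by
      have h1 := hfac b hb
      have h2 := hfac c hc
      exact two_pow_mul_odd_inj (hodd b hb) (hodd c hc) (by rw [← h1, ← h2, h])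
    -- peel the last term
    rw [Fin.sum_univ_castSucc (f := fun j : Fin (k + 2) => 3 ^ (j : ℕ) * 2 ^ (b j)),
      Fin.sum_univ_castSucc (f := fun j : Fin (k + 2) => 3 ^ (j : ℕ) * 2 ^ (c j))] at h
    simp only [Fin.coe_castSucc, Fin.val_last] at h
    rw [hmeq] at h
    have h' : (∑ j : Fin (k + 1), 3 ^ (j : ℕ) * 2 ^ ((b ∘ Fin.castSucc) j)) =
        (∑ j : Fin (k + 1), 3 ^ (j : ℕ) * 2 ^ ((c ∘ Fin.castSucc) j)) :=
      Nat.add_right_cancel h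
    have hbc := ih (b ∘ Fin.castSucc) (c ∘ Fin.castSucc)
      (fun x y hxy => hb (Fin.castSucc_lt_castSucc_iff.mpr hxy))
      (fun x y hxy => hc (Fin.castSucc_lt_castSucc_iff.mpr hxy)) h'
    funext j
    induction j using Fin.lastCases with
    | last => exact hmeq
    | cast i => exact congrFun hbc i

/-- If two tuples `(a₁,…,a_{k+1})`, `(a'₁,…,a'_{k+1})` of positive integers both sum
to `l`, and the natural numbers `Σ_{j=1}^{k+1} 3^{j-1} 2^{l-(a₁+⋯+a_j)}` and
`Σ_{j=1}^{k+1} 3^{j-1} 2^{l-(a'₁+⋯+a'_j)}` are both `< 3^n` and congruent mod `3^n`,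
then the tuples are equal. -/
theorem stmt_16 (n k l : ℕ) (a a' : Fin (k + 1) → ℕ)
    (ha : ∀ i, 0 < a i) (ha' : ∀ i, 0 < a' i)
    (hs : ∑ i, a i = l) (hs' : ∑ i, a' i = l)
    (hlt : (∑ j : Fin (k + 1), 3 ^ (j : ℕ) * 2 ^ (l - ∑ i ∈ Finset.Iic j, a i)) < 3 ^ n)
    (hlt' : (∑ j : Fin (k + 1), 3 ^ (j : ℕ) * 2 ^ (l - ∑ i ∈ Finset.Iic j, a' i)) < 3 ^ n)
    (hcong : (∑ j : Fin (k + 1), 3 ^ (j : ℕ) * 2 ^ (l - ∑ i ∈ Finset.Iic j, a i))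
        ≡ (∑ j : Fin (k + 1), 3 ^ (j : ℕ) * 2 ^ (l - ∑ i ∈ Finset.Iic j, a' i))
          [MOD 3 ^ n]) :
    a = a' := by
  have heq := Nat.ModEq.eq_of_lt_of_lt hcong hlt hlt'
  have hle : ∀ (a : Fin (k + 1) → ℕ), (∑ i, a i = l) → ∀ j, ∑ i ∈ Finset.Iic j, a i ≤ l :=
    fun a hs j => hs ▸ Finset.sum_le_sum_of_subset (Finset.subset_univ _)
  have hmono : ∀ (a : Fin (k + 1) → ℕ), (∀ i, 0 < a i) → (∑ i, a i = l) →
      StrictAnti (fun j => l - ∑ i ∈ Finset.Iic j, a i) := by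
    intro a ha hs x y hxy
    have h1 : ∑ i ∈ Finset.Iic x, a i < ∑ i ∈ Finset.Iic y, a i :=
      Finset.sum_lt_sum_of_subset (Finset.Iic_subset_Iic.mpr hxy.le)
        (Finset.mem_Iic.mpr le_rfl) (fun hmem => absurd (Finset.mem_Iic.mp hmem)
          (not_le.mpr hxy)) (ha y) (fun j _ _ => Nat.zero_le _)
    have h2 := hle a hs y
    simp only
    omega
  have hbc := core_inj k _ _ (hmono a ha hs) (hmono a' ha' hs') heq
  have hT : ∀ j, ∑ i ∈ Finset.Iic j, a i = ∑ i ∈ Finset.Iic j, a' i := by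
    intro j
    have h1 := congrFun hbc j
    have h2 := hle a hs j
    have h3 := hle a' hs' j
    omega
  have key : ∀ (m : ℕ) (j : Fin (k + 1)), (j : ℕ) ≤ m → a j = a' j := by
    intro m
    induction m with
    | zero =>
      intro j hj
      have h1 := hT j
      rw [← Finset.Iio_insert, Finset.sum_insert (by simp), Finset.sum_insert (by simp)] at h1
      have h2 : ∑ i ∈ Finset.Iio j, a i = ∑ i ∈ Finset.Iio j, a' i :=
        Finset.sum_congr rfl fun i hi => by
          have : (i : ℕ) < (j : ℕ) := Fin.lt_iff_val_lt_val.mp (Finset.mem_Iio.mp hi)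
          omega
      omega
    | succ m ihm =>
      intro j hj
      have h1 := hT j
      rw [← Finset.Iio_insert, Finset.sum_insert (by simp), Finset.sum_insert (by simp)] at h1
      have h2 : ∑ i ∈ Finset.Iio j, a i = ∑ i ∈ Finset.Iio j, a' i :=
        Finset.sum_congr rfl fun i hi => by
          have hlt : (i : ℕ) < (j : ℕ) := Fin.lt_iff_val_lt_val.mp (Finset.mem_Iio.mp hi)
          exact ihm i (by omega)
      omega
  funext j
  exact key (j : ℕ) j le_rfl
end

section
/- Suppose that for every function f : ℕ₊_odd → ℝ with f(N) → ∞, one has Syr_min(N) < f(N) for almost all odd N (in logarithmic density). Then for every function g : ℕ₊ → ℝ with g(N) → ∞, one has Col_min(N) < g(N) for almost all positive integers N (in logarithmic density). -/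
open Classical Filter Finset


/-- The Collatz map: `3N+1` for odd `N`, `N/2` for even `N`. -/
def col (n : ℕ) : ℕ := if Odd n then 3 * n + 1 else n / 2

/-- The minimal element of the Collatz orbit of `N`. -/
noncomputable def colMin (N : ℕ) : ℕ := sInf (Set.range fun n => col^[n] N)

/-- The minimal element of the Syracuse orbit of `N`. -/
noncomputable def syrMin (N : ℕ) : ℕ := sInf (Set.range fun n => syr^[n] N)

open Classical in
/-- `P` holds for almost all positive integers in the sense of logarithmic density. -/
noncomputable def almostAllLog (P : ℕ → Prop) : Prop :=
  Filter.Tendsto (fun x : ℕ =>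
      (∑ N ∈ Finset.Icc 1 x, if P N then (1:ℝ) / N else 0) /
        (∑ N ∈ Finset.Icc 1 x, (1:ℝ) / N))
    Filter.atTop (nhds 1)

open Classical in
/-- `P` holds for almost all odd positive integers in the sense of logarithmic density
(relative to the odd numbers). -/
noncomputable def almostAllLogOdd (P : ℕ → Prop) : Prop :=
  Filter.Tendsto (fun x : ℕ =>
      (∑ N ∈ Finset.Icc 1 x, if Odd N ∧ P N then (1:ℝ) / N else 0) /
        (∑ N ∈ Finset.Icc 1 x, if Odd N then (1:ℝ) / N else 0))
    Filter.atTop (nhds 1)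

lemma col_iter_pow (a m : ℕ) : col^[a] (2 ^ a * m) = m := by
  induction a with
  | zero => simp
  | succ k ih =>
    have h1 : col (2 ^ (k+1) * m) = 2 ^ k * m := by
      have he : ¬ Odd (2 ^ (k+1) * m) := by
        rw [Nat.not_odd_iff_even, pow_succ]
        exact ⟨2 ^ k * m, by ring⟩
      rw [col, if_neg he, pow_succ]
      have h2 : 2 ^ k * 2 * m = 2 ^ k * m * 2 := by ring
      rw [h2, Nat.mul_div_cancel _ two_pos]
    rw [Function.iterate_succ_apply, h1, ih]

lemma odd_syr (m : ℕ) : Odd (syr m) := by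
  have h : ¬ (2 ∣ ordCompl[2] (3 * m + 1)) :=
    Nat.not_dvd_ordCompl Nat.prime_two (by omega)
  rcases Nat.even_or_odd (syr m) with he | ho
  · exact absurd he.two_dvd h
  · exact ho

lemma odd_ordCompl {N : ℕ} (hN : N ≠ 0) : Odd (ordCompl[2] N) := by
  have h : ¬ (2 ∣ ordCompl[2] N) := Nat.not_dvd_ordCompl Nat.prime_two hN
  rcases Nat.even_or_odd (ordCompl[2] N) with he | ho
  · exact absurd he.two_dvd h
  · exact ho

lemma syr_eq_col_iter {m : ℕ} (hm : Odd m) : ∃ k, col^[k] m = syr m := by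
  set k := (3 * m + 1).factorization 2 with hk
  refine ⟨k + 1, ?_⟩
  rw [Function.iterate_succ_apply]
  have h1 : col m = 3 * m + 1 := by rw [col, if_pos hm]
  rw [h1]
  have h2 : 3 * m + 1 = 2 ^ k * ordCompl[2] (3 * m + 1) :=
    (Nat.ordProj_mul_ordCompl_eq_self (3 * m + 1) 2).symm
  conv_lhs => rw [h2]
  rw [col_iter_pow]
  rfl

lemma syr_iter_in_col (N : ℕ) (hN : N ≠ 0) (n : ℕ) :
    ∃ j, col^[j] N = syr^[n] (ordCompl[2] N) := by
  induction n with
  | zero =>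
    set k := N.factorization 2 with hk
    refine ⟨k, ?_⟩
    have h2 : N = 2 ^ k * ordCompl[2] N :=
      (Nat.ordProj_mul_ordCompl_eq_self N 2).symm
    conv_lhs => rw [h2]
    rw [col_iter_pow]
    rfl
  | succ n ih =>
    obtain ⟨j, hj⟩ := ih
    have hodd : Odd (syr^[n] (ordCompl[2] N)) := by
      cases n with
      | zero => exact odd_ordCompl hN
      | succ n => rw [Function.iterate_succ_apply']; exact odd_syr _
    obtain ⟨k, hk⟩ := syr_eq_col_iter hodd
    refine ⟨k + j, ?_⟩
    rw [Function.iterate_add_apply, hj, hk, Function.iterate_succ_apply']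

lemma colMin_le_syrMin {N : ℕ} (hN : N ≠ 0) : colMin N ≤ syrMin (ordCompl[2] N) := by
  have hne : (Set.range fun n => syr^[n] (ordCompl[2] N)).Nonempty := Set.range_nonempty _
  obtain ⟨n, hn⟩ := Nat.sInf_mem hne
  obtain ⟨j, hj⟩ := syr_iter_in_col N hN n
  refine Nat.sInf_le ⟨j, ?_⟩
  show col^[j] N = _
  rw [hj]
  exact hn
open Classical Filter Finset

lemma sum_reindex (a x : ℕ) (F : ℕ → ℝ) (hF : ∀ m, 0 ≤ F m) :
    (∑ N ∈ Finset.Icc 1 x, if 2 ^ a ∣ N then F (N / 2 ^ a) / N else 0)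
      ≤ ((2:ℝ) ^ a)⁻¹ * ∑ M ∈ Finset.Icc 1 x, F M / M := by
  rw [← Finset.sum_filter]
  set s := (Finset.Icc 1 x).filter (fun N => 2 ^ a ∣ N) with hs
  have key : ∀ N ∈ s, F (N / 2 ^ a) / (N:ℝ) = ((2:ℝ)^a)⁻¹ * (F (N / 2^a) / ((N / 2^a : ℕ):ℝ)) := by
    intro N hN
    simp only [hs, Finset.mem_filter, Finset.mem_Icc] at hN
    obtain ⟨⟨h1, _⟩, hd⟩ := hN
    have hm1 : 1 ≤ N / 2 ^ a := by
      rw [Nat.one_le_div_iff (Nat.two_pow_pos a)]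
      exact Nat.le_of_dvd h1 hd
    have hNr : (N:ℝ) = (2:ℝ)^a * ((N / 2^a : ℕ):ℝ) := by
      have := Nat.mul_div_cancel' hd
      calc (N:ℝ) = ((2 ^ a * (N / 2 ^ a) : ℕ) : ℝ) := by rw [this]
        _ = (2:ℝ)^a * ((N / 2^a : ℕ):ℝ) := by push_cast; ring
    rw [hNr]
    have h2 : ((2:ℝ)^a) ≠ 0 := by positivity
    have h3 : ((N / 2^a : ℕ):ℝ) ≠ 0 := by
      have : (0:ℝ) < ((N / 2^a : ℕ):ℝ) := by exact_mod_cast hm1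
      linarith
    field_simp
  rw [Finset.sum_congr rfl key, ← Finset.mul_sum]
  have hinj : ∀ n₁ ∈ s, ∀ n₂ ∈ s, n₁ / 2 ^ a = n₂ / 2 ^ a → n₁ = n₂ := by
    intro n₁ h1 n₂ h2 h
    simp only [hs, Finset.mem_filter] at h1 h2
    rw [← Nat.mul_div_cancel' h1.2, ← Nat.mul_div_cancel' h2.2, h]
  have himg : ∑ N ∈ s, F (N / 2^a) / ((N / 2^a : ℕ):ℝ)
      = ∑ M ∈ s.image (fun N => N / 2^a), F M / (M:ℝ) :=
    (Finset.sum_image (f := fun M => F M / (M:ℝ)) hinj).symm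
  rw [himg]
  refine mul_le_mul_of_nonneg_left (Finset.sum_le_sum_of_subset_of_nonneg ?_ ?_) (by positivity)
  · intro m hm
    simp only [Finset.mem_image, hs, Finset.mem_filter, Finset.mem_Icc] at hm
    obtain ⟨N, ⟨⟨h1, h2⟩, hd⟩, rfl⟩ := hm
    refine Finset.mem_Icc.mpr ⟨?_, le_trans (Nat.div_le_self _ _) h2⟩
    rw [Nat.one_le_div_iff (Nat.two_pow_pos a)]
    exact Nat.le_of_dvd h1 hd
  · intro m _ _
    exact div_nonneg (hF m) (Nat.cast_nonneg m)

lemma decomp (x A : ℕ) (Q : ℕ → Prop) :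
    (∑ N ∈ Finset.Icc 1 x, if Q N then (1:ℝ)/N else 0)
      ≤ (∑ a ∈ Finset.range A, ∑ N ∈ Finset.Icc 1 x,
            if Q N ∧ N.factorization 2 = a then (1:ℝ)/N else 0)
        + ∑ N ∈ Finset.Icc 1 x, (if 2^A ∣ N then (1:ℝ)/N else 0) := by
  rw [Finset.sum_comm, ← Finset.sum_add_distrib]
  refine Finset.sum_le_sum ?_
  intro N hN
  by_cases hQ : Q N
  · by_cases hν : N.factorization 2 < A
    · have h1 : (if Q N ∧ N.factorization 2 = N.factorization 2 then (1:ℝ)/N else 0)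
          ≤ ∑ a ∈ Finset.range A, (if Q N ∧ N.factorization 2 = a then (1:ℝ)/N else 0) := by
        refine Finset.single_le_sum (f := fun a => if Q N ∧ N.factorization 2 = a then (1:ℝ)/N else 0) ?_ (Finset.mem_range.mpr hν)
        intro a _
        positivity
      rw [if_pos ⟨hQ, rfl⟩] at h1
      have h2 : (0:ℝ) ≤ if 2^A ∣ N then (1:ℝ)/N else 0 := by positivity
      rw [if_pos hQ]
      linarith
    · have hdvd : 2 ^ A ∣ N := dvd_trans (pow_dvd_pow 2 (le_of_not_gt hν)) (Nat.ordProj_dvd N 2)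
      have h1 : (0:ℝ) ≤ ∑ a ∈ Finset.range A, (if Q N ∧ N.factorization 2 = a then (1:ℝ)/N else 0) := by
        refine Finset.sum_nonneg ?_; intro a _; positivity
      rw [if_pos hQ, if_pos hdvd]
      linarith
  · rw [if_neg hQ]
    have h1 : (0:ℝ) ≤ ∑ a ∈ Finset.range A, (if Q N ∧ N.factorization 2 = a then (1:ℝ)/N else 0) := by
      refine Finset.sum_nonneg ?_; intro a _; positivity
    have h2 : (0:ℝ) ≤ if 2^A ∣ N then (1:ℝ)/N else 0 := by positivity
    linarith

lemma D_pos {x : ℕ} (hx : 1 ≤ x) : (0:ℝ) < ∑ N ∈ Finset.Icc 1 x, (1:ℝ)/N := by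
  refine Finset.sum_pos ?_ ⟨1, Finset.mem_Icc.mpr ⟨le_refl 1, hx⟩⟩
  intro N hN
  have := (Finset.mem_Icc.mp hN).1
  positivity

lemma O_pos {x : ℕ} (hx : 1 ≤ x) :
    (0:ℝ) < ∑ N ∈ Finset.Icc 1 x, (if Odd N then (1:ℝ)/N else 0) := by
  refine Finset.sum_pos' ?_ ⟨1, Finset.mem_Icc.mpr ⟨le_refl 1, hx⟩, ?_⟩
  · intro N _
    split <;> positivity
  · rw [if_pos odd_one]
    norm_num

lemma O_le_D (x : ℕ) :
    (∑ N ∈ Finset.Icc 1 x, if Odd N then (1:ℝ)/N else 0) ≤ ∑ N ∈ Finset.Icc 1 x, (1:ℝ)/N := by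
  refine Finset.sum_le_sum ?_
  intro N hN
  have := (Finset.mem_Icc.mp hN).1
  split
  · exact le_refl _
  · positivity

/-- If for every `f` with `f(N) → ∞` one has `Syr_min(N) < f(N)` for almost all odd
`N` (logarithmic density), then for every `g` with `g(N) → ∞` one has
`Col_min(N) < g(N)` for almost all positive integers `N` (logarithmic density). -/
theorem stmt_18
    (hsyr : ∀ f : ℕ → ℝ, Filter.Tendsto f Filter.atTop Filter.atTop →
      almostAllLogOdd (fun N => (syrMin N : ℝ) < f N)) :
    ∀ g : ℕ → ℝ, Filter.Tendsto g Filter.atTop Filter.atTop →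
      almostAllLog (fun N => (colMin N : ℝ) < g N) := by
  intro g hg
  unfold almostAllLog
  set D : ℕ → ℝ := fun x => ∑ N ∈ Finset.Icc 1 x, (1:ℝ)/N with hD
  set B : ℕ → ℝ := fun x => ∑ N ∈ Finset.Icc 1 x,
      if ¬ ((colMin N : ℝ) < g N) then (1:ℝ)/N else 0 with hBdef
  set O : ℕ → ℝ := fun x => ∑ N ∈ Finset.Icc 1 x, if Odd N then (1:ℝ)/N else 0 with hO
  set Bad : ℕ → ℕ → ℝ := fun a x => ∑ N ∈ Finset.Icc 1 x,
      if Odd N ∧ ¬ ((syrMin N : ℝ) < g (2^a * N)) then (1:ℝ)/N else 0 with hBad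
  -- Step 1 : for each a, Bad a / O → 0
  have key : ∀ a : ℕ, Tendsto (fun x => Bad a x / O x) atTop (nhds 0) := by
    intro a
    have hf : Tendsto (fun M : ℕ => g (2^a * M)) atTop atTop := by
      refine hg.comp (tendsto_atTop_mono ?_ tendsto_id)
      intro M
      exact Nat.le_mul_of_pos_left M (Nat.two_pow_pos a)
    have h1 := hsyr _ hf
    unfold almostAllLogOdd at h1
    have h2 : Tendsto (fun x : ℕ => 1 -
        (∑ N ∈ Finset.Icc 1 x, if Odd N ∧ (syrMin N : ℝ) < g (2^a * N) then (1:ℝ)/N else 0) /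
          (∑ N ∈ Finset.Icc 1 x, if Odd N then (1:ℝ)/N else 0)) atTop (nhds 0) := by
      have := (tendsto_const_nhds (x := (1:ℝ)) (f := atTop (α := ℕ))).sub h1
      simpa using this
    refine h2.congr' ?_
    filter_upwards [eventually_ge_atTop 1] with x hx
    have hOp := O_pos hx
    have hsum : (∑ N ∈ Finset.Icc 1 x, if Odd N ∧ (syrMin N : ℝ) < g (2^a * N) then (1:ℝ)/N else 0)
        + Bad a x = O x := by
      rw [hBad, hO, ← Finset.sum_add_distrib]
      refine Finset.sum_congr rfl ?_
      intro N _
      by_cases ho : Odd N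
      · by_cases hlt : (syrMin N : ℝ) < g (2^a * N) <;> simp [ho, hlt]
      · simp [ho]
    have hOne : O x ≠ 0 := ne_of_gt hOp
    simp only [hO] at hsum hOne ⊢
    field_simp
    linarith [hsum]
  -- Step 2 : B / D → 0
  have hB0 : Tendsto (fun x => B x / D x) atTop (nhds 0) := by
    rw [Metric.tendsto_atTop]
    intro ε hε
    obtain ⟨A, hA⟩ := exists_pow_lt_of_lt_one (by linarith : (0:ℝ) < ε/2)
      (by norm_num : (1:ℝ)/2 < 1)
    have hev : ∀ᶠ x : ℕ in atTop, ∀ a ∈ Finset.range A, Bad a x / O x < ε/8 := by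
      rw [Filter.eventually_all_finset]
      intro a _
      exact (key a).eventually_lt_const (by linarith)
    obtain ⟨x₀, hx₀⟩ := (hev.and (eventually_ge_atTop 1)).exists_forall_of_atTop
    refine ⟨x₀, ?_⟩
    intro x hxx
    obtain ⟨hlt, hx1⟩ := hx₀ x hxx
    have hDp := D_pos hx1
    have hOp := O_pos hx1
    have hdec : (∑ N ∈ Finset.Icc 1 x, if ¬ ((colMin N : ℝ) < g N) then (1:ℝ)/N else 0)
        ≤ (∑ a ∈ Finset.range A, ∑ N ∈ Finset.Icc 1 x,
              if (¬ ((colMin N : ℝ) < g N)) ∧ N.factorization 2 = a then (1:ℝ)/N else 0)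
          + ∑ N ∈ Finset.Icc 1 x, (if 2^A ∣ N then (1:ℝ)/N else 0) := by
      convert decomp x A (fun N => ¬ ((colMin N : ℝ) < g N)) using 2 with N hN
      · by_cases h : (colMin N : ℝ) < g N <;> simp [h]
      · refine Finset.sum_congr rfl fun a _ => Finset.sum_congr rfl fun N _ => ?_
        by_cases h1 : (colMin N : ℝ) < g N <;> by_cases h2 : N.factorization 2 = a <;>
          simp [h1, h2]
    have hper : ∀ a ∈ Finset.range A,
        (∑ N ∈ Finset.Icc 1 x,
            if (¬ ((colMin N : ℝ) < g N)) ∧ N.factorization 2 = a then (1:ℝ)/N else 0)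
          ≤ ((2:ℝ)^a)⁻¹ * Bad a x := by
      intro a _
      set F : ℕ → ℝ := fun M => if Odd M ∧ ¬ ((syrMin M : ℝ) < g (2^a * M)) then 1 else 0 with hF
      have hFnn : ∀ m, 0 ≤ F m := by
        intro m; rw [hF]; dsimp only; split <;> norm_num
      have step1 : (∑ N ∈ Finset.Icc 1 x,
            if (¬ ((colMin N : ℝ) < g N)) ∧ N.factorization 2 = a then (1:ℝ)/N else 0)
          ≤ ∑ N ∈ Finset.Icc 1 x, if 2 ^ a ∣ N then F (N / 2 ^ a) / N else 0 := by
        refine Finset.sum_le_sum ?_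
        intro N hN
        obtain ⟨hN1, _⟩ := Finset.mem_Icc.mp hN
        have hN0 : N ≠ 0 := by omega
        by_cases h : (¬ ((colMin N : ℝ) < g N)) ∧ N.factorization 2 = a
        · obtain ⟨hQ, hν⟩ := h
          have hd : 2^a ∣ N := by rw [← hν]; exact Nat.ordProj_dvd N 2
          rw [if_pos ⟨hQ, hν⟩, if_pos hd]
          have hM : N / 2^a = ordCompl[2] N := by rw [← hν]
          have hoddM : Odd (N / 2^a) := by rw [hM]; exact odd_ordCompl hN0
          have hcol : colMin N ≤ syrMin (N / 2^a) := by rw [hM]; exact colMin_le_syrMin hN0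
          have hNM : 2^a * (N / 2^a) = N := Nat.mul_div_cancel' hd
          have hFc : F (N / 2^a) = 1 := by
            rw [hF]; dsimp only
            rw [if_pos]
            refine ⟨hoddM, ?_⟩
            intro hltc
            rw [hNM] at hltc
            refine hQ (lt_of_le_of_lt ?_ hltc)
            exact_mod_cast hcol
          rw [hFc]
        · rw [if_neg h]
          split
          · exact div_nonneg (hFnn _) (Nat.cast_nonneg _)
          · exact le_refl 0
      have step2 := sum_reindex a x F hFnn
      have step3 : (∑ M ∈ Finset.Icc 1 x, F M / M) = Bad a x := by
        rw [hBad]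
        refine Finset.sum_congr rfl ?_
        intro M _
        rw [hF]; dsimp only
        by_cases h : Odd M ∧ ¬ ((syrMin M : ℝ) < g (2^a * M))
        · rw [if_pos h, if_pos h, one_div]
        · rw [if_neg h, if_neg h, zero_div]
      rw [step3] at step2
      exact le_trans step1 step2
    have htail : (∑ N ∈ Finset.Icc 1 x, if 2^A ∣ N then (1:ℝ)/N else 0)
        ≤ ((2:ℝ)^A)⁻¹ * D x := by
      have := sum_reindex A x (fun _ => 1) (fun _ => by norm_num)
      simpa [hD] using this
    have hBadlt : ∀ a ∈ Finset.range A, Bad a x ≤ ε/8 * D x := by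
      intro a ha
      have h1 := hlt a ha
      rw [div_lt_iff₀ hOp] at h1
      have h3 : O x ≤ D x := O_le_D x
      nlinarith [hOp]
    have h1 : B x ≤ (∑ a ∈ Finset.range A, ((2:ℝ)^a)⁻¹ * Bad a x) + ((2:ℝ)^A)⁻¹ * D x := by
      rw [hBdef]
      dsimp only
      exact le_trans hdec (add_le_add (Finset.sum_le_sum hper) htail)
    have hpa : ((2:ℝ)^A)⁻¹ < ε/2 := by
      have h2 : ((1:ℝ)/2)^A = ((2:ℝ)^A)⁻¹ := by rw [div_pow, one_pow, one_div]
      rw [h2] at hA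
      exact hA
    have hBx : B x ≤ (∑ a ∈ Finset.range A, ((2:ℝ)^a)⁻¹ * (ε/8 * D x)) + ε/2 * D x := by
      refine le_trans h1 (add_le_add (Finset.sum_le_sum ?_) ?_)
      · intro a ha
        exact mul_le_mul_of_nonneg_left (hBadlt a ha) (by positivity)
      · nlinarith [hDp]
    have hgeom : (∑ a ∈ Finset.range A, ((2:ℝ)^a)⁻¹ * (ε/8 * D x)) ≤ 2 * (ε/8 * D x) := by
      rw [← Finset.sum_mul]
      refine mul_le_mul_of_nonneg_right ?_ (by positivity)
      have hsg := sum_geometric_two_le A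
      calc ∑ a ∈ Finset.range A, ((2:ℝ)^a)⁻¹
          = ∑ a ∈ Finset.range A, ((1:ℝ)/2)^a := by
            refine Finset.sum_congr rfl ?_
            intro a _
            rw [div_pow, one_pow, one_div]
        _ ≤ 2 := hsg
    have hBfin : B x < ε * D x := by nlinarith
    have hBnn : 0 ≤ B x := by
      rw [hBdef]
      refine Finset.sum_nonneg ?_
      intro N _
      split
      · positivity
      · exact le_refl 0
    rw [Real.dist_eq, sub_zero, abs_of_nonneg (div_nonneg hBnn hDp.le), div_lt_iff₀ hDp]
    exact hBfin
  -- Step 3 : conclude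
  have hfin : Tendsto (fun x => 1 - B x / D x) atTop (nhds 1) := by
    have := (tendsto_const_nhds (x := (1:ℝ)) (f := atTop (α := ℕ))).sub hB0
    simpa using this
  refine hfin.congr' ?_
  filter_upwards [eventually_ge_atTop 1] with x hx
  have hDp := D_pos hx
  have hsum : (∑ N ∈ Finset.Icc 1 x, if (colMin N : ℝ) < g N then (1:ℝ)/N else 0) + B x = D x := by
    rw [hBdef, hD, ← Finset.sum_add_distrib]
    refine Finset.sum_congr rfl ?_
    intro N _
    by_cases h : (colMin N : ℝ) < g N <;> simp [h]
  have hDne : D x ≠ 0 := ne_of_gt hDp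
  simp only [hD] at hsum hDne ⊢
  field_simp
  linarith [hsum]
end
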